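/- arXiv:1006.1165 — 5 statements merged into one kernel-verified Lean document; each statement's English description precedes it below -/
import Mathlib

section
/- For any feasible solution S to BLOCK-ALL (a set of ≤ F pairwise-disjoint dyadic intervals covering BL), there exists a feasible solution S' with |S'| ≤ |S| and collateral damage ≤ that of S, such that every interval in S' contains at least one blacklisted address and every interval in S' is the minimal dyadic interval containing the blacklisted addresses it covers (i.e., it is the longest common prefix of BL ∩ that interval). -/
/-- `ip` lies in the dyadic interval of prefix `q = (p, l)` in `w`-bit address space:
`[p·2^(w−l), (p+1)·2^(w−l))`. -/
def inI (w : ℕ) (q : ℕ × ℕ) (ip : ℕ) : Prop :=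
  q.1 * 2 ^ (w - q.2) ≤ ip ∧ ip < (q.1 + 1) * 2 ^ (w - q.2)

instance (w : ℕ) (q : ℕ × ℕ) (ip : ℕ) : Decidable (inI w q ip) := by
  unfold inI; infer_instance

/-- `(p, l)` is a valid prefix: `l ≤ w` and `p < 2^l`. -/
def ValidPrefix (w : ℕ) (q : ℕ × ℕ) : Prop := q.2 ≤ w ∧ q.1 < 2 ^ q.2

/-- The dyadic intervals of the prefixes in `S` are pairwise disjoint. -/
def PairwiseDisjointI (w : ℕ) (S : Finset (ℕ × ℕ)) : Prop :=
  ∀ q ∈ S, ∀ q' ∈ S, q ≠ q' → ∀ ip, ¬(inI w q ip ∧ inI w q' ip)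
/-!
Replace each interval `q` that meets `BL` by the longest common prefix of `BL ∩ q` and drop the
others. The new interval lies inside `q` and still covers `BL ∩ q`, so feasibility, size and
collateral damage are preserved. It is minimal because a dyadic interval through a point `a` is
determined by its length, and no interval containing `BL ∩ q` has a longer prefix.
-/

lemma inI_iff_div_eq (w : ℕ) (q : ℕ × ℕ) (ip : ℕ) : inI w q ip ↔ ip / 2 ^ (w - q.2) = q.1 := by
  have hpos : 0 < 2 ^ (w - q.2) := Nat.two_pow_pos _
  constructor
  · rintro ⟨hlo, hhi⟩
    exact Nat.div_eq_of_lt_le hlo hhi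
  · intro h
    rw [inI, ← h]
    exact ⟨Nat.div_mul_le_self _ _, by rw [add_mul, one_mul]; exact Nat.lt_div_mul_add hpos⟩

lemma lt_two_pow_of_inI {w ip : ℕ} {q : ℕ × ℕ} (hq : ValidPrefix w q) (h : inI w q ip) :
    ip < 2 ^ w :=
  calc ip < (q.1 + 1) * 2 ^ (w - q.2) := h.2
    _ ≤ 2 ^ q.2 * 2 ^ (w - q.2) := Nat.mul_le_mul_right _ hq.2
    _ = 2 ^ w := by rw [← pow_add, Nat.add_sub_cancel' hq.1]

lemma snd_le_snd_of_inI_imp_inI {w : ℕ} {q q' : ℕ × ℕ} (hq : q.2 ≤ w) (hq' : q'.2 ≤ w)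
    (h : ∀ ip, inI w q' ip → inI w q ip) : q.2 ≤ q'.2 := by
  have hsub : Finset.Ico (q'.1 * 2 ^ (w - q'.2)) ((q'.1 + 1) * 2 ^ (w - q'.2)) ⊆
      Finset.Ico (q.1 * 2 ^ (w - q.2)) ((q.1 + 1) * 2 ^ (w - q.2)) := fun ip hip =>
    Finset.mem_Ico.2 (h ip (Finset.mem_Ico.1 hip))
  have hcard := Finset.card_le_card hsub
  simp only [Nat.card_Ico, add_mul, one_mul, Nat.add_sub_cancel_left] at hcard
  have := (Nat.pow_le_pow_iff_right (by norm_num)).1 hcard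
  omega

def prefixOf (w a l : ℕ) : ℕ × ℕ := (a / 2 ^ (w - l), l)

lemma inI_prefixOf {w a l x : ℕ} :
    inI w (prefixOf w a l) x ↔ x / 2 ^ (w - l) = a / 2 ^ (w - l) :=
  inI_iff_div_eq w _ x

lemma eq_prefixOf_of_inI {w a : ℕ} {q : ℕ × ℕ} (h : inI w q a) : q = prefixOf w a q.2 := by
  rw [inI_iff_div_eq] at h
  exact Prod.ext h.symm rfl

lemma inI_prefixOf_of_le {w a x l L : ℕ} (hlL : l ≤ L) (hL : L ≤ w)
    (h : inI w (prefixOf w a L) x) : inI w (prefixOf w a l) x := by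
  rw [inI_prefixOf] at h ⊢
  have hw : w - l = (w - L) + (L - l) := by omega
  rw [hw, pow_add, ← Nat.div_div_eq_div_mul, ← Nat.div_div_eq_div_mul, h]

lemma validPrefix_prefixOf {w a l : ℕ} (ha : a < 2 ^ w) (hl : l ≤ w) :
    ValidPrefix w (prefixOf w a l) := by
  refine ⟨hl, (Nat.div_lt_iff_lt_mul (Nat.two_pow_pos _)).2 ?_⟩
  show a < 2 ^ l * 2 ^ (w - l)
  rwa [← pow_add, Nat.add_sub_cancel' hl]

def lcpLength (w : ℕ) (A : Finset ℕ) : ℕ :=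
  Nat.findGreatest (fun l => ∀ x ∈ A, ∀ y ∈ A, x / 2 ^ (w - l) = y / 2 ^ (w - l)) w

/-- For `A = ∅` this is the junk value `(0, w)`. -/
def lcpPrefix (w : ℕ) (A : Finset ℕ) : ℕ × ℕ := prefixOf w (A.sup id) (lcpLength w A)

section LongestCommonPrefix

variable {w : ℕ} {A : Finset ℕ}

lemma sup_id_mem (hA : A.Nonempty) : A.sup id ∈ A := by
  simpa using Finset.sup_mem_of_nonempty (f := id) hA

lemma lcpLength_le : lcpLength w A ≤ w := Nat.findGreatest_le w

lemma le_lcpLength {q : ℕ × ℕ} (hq : q.2 ≤ w) (hAq : ∀ x ∈ A, inI w q x) :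
    q.2 ≤ lcpLength w A :=
  Nat.le_findGreatest hq fun x hx y hy =>
    ((inI_iff_div_eq w q x).1 (hAq x hx)).trans ((inI_iff_div_eq w q y).1 (hAq y hy)).symm

lemma div_eq_div_lcpLength (hlt : ∀ x ∈ A, x < 2 ^ w) :
    ∀ x ∈ A, ∀ y ∈ A, x / 2 ^ (w - lcpLength w A) = y / 2 ^ (w - lcpLength w A) :=
  Nat.findGreatest_spec (P := fun l => ∀ x ∈ A, ∀ y ∈ A, x / 2 ^ (w - l) = y / 2 ^ (w - l))
    (Nat.zero_le w) fun x hx y hy => by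
      rw [Nat.sub_zero, Nat.div_eq_of_lt (hlt x hx), Nat.div_eq_of_lt (hlt y hy)]

lemma inI_lcpPrefix (hlt : ∀ x ∈ A, x < 2 ^ w) : ∀ x ∈ A, inI w (lcpPrefix w A) x :=
  fun x hx => inI_prefixOf.2 (div_eq_div_lcpLength hlt x hx _ (sup_id_mem ⟨x, hx⟩))

lemma validPrefix_lcpPrefix (hA : A.Nonempty) (hlt : ∀ x ∈ A, x < 2 ^ w) :
    ValidPrefix w (lcpPrefix w A) :=
  validPrefix_prefixOf (hlt _ (sup_id_mem hA)) lcpLength_le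

lemma lcpPrefix_subset {q : ℕ × ℕ} (hA : A.Nonempty) (hq : q.2 ≤ w)
    (hAq : ∀ x ∈ A, inI w q x) : ∀ ip, inI w (lcpPrefix w A) ip → inI w q ip := by
  intro ip hip
  rw [eq_prefixOf_of_inI (hAq _ (sup_id_mem hA))]
  exact inI_prefixOf_of_le (le_lcpLength hq hAq) lcpLength_le hip

lemma eq_lcpPrefix {q : ℕ × ℕ} (hA : A.Nonempty) (hq : q.2 ≤ w) (hAq : ∀ x ∈ A, inI w q x)
    (hsub : ∀ ip, inI w q ip → inI w (lcpPrefix w A) ip) : q = lcpPrefix w A := by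
  have hlen : q.2 = lcpLength w A :=
    le_antisymm (le_lcpLength hq hAq) (snd_le_snd_of_inI_imp_inI lcpLength_le hq hsub)
  rw [eq_prefixOf_of_inI (hAq _ (sup_id_mem hA)), hlen]
  rfl

end LongestCommonPrefix

/-- Counted per interval; this is the paper's `∑ ip ∈ WL ∩ ⋃ S, w ip` when `S` is disjoint. -/
def collateralDamage (w : ℕ) (WL : Finset ℕ) (wgt : ℕ → ℝ) (S : Finset (ℕ × ℕ)) : ℝ :=
  ∑ q ∈ S, ∑ ip ∈ WL.filter (fun ip => inI w q ip), wgt ip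

section Shrinking

variable {w : ℕ} {S T : Finset (ℕ × ℕ)} {f : ℕ × ℕ → ℕ × ℕ}

lemma PairwiseDisjointI.mono (h : PairwiseDisjointI w S) (hTS : T ⊆ S) : PairwiseDisjointI w T :=
  fun q hq q' hq' => h q (hTS hq) q' (hTS hq')

lemma PairwiseDisjointI.image (h : PairwiseDisjointI w S)
    (hf : ∀ q ∈ S, ∀ ip, inI w (f q) ip → inI w q ip) : PairwiseDisjointI w (S.image f) := by
  rintro _ hq _ hq' hne ip ⟨hip, hip'⟩
  obtain ⟨o, ho, rfl⟩ := Finset.mem_image.1 hq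
  obtain ⟨o', ho', rfl⟩ := Finset.mem_image.1 hq'
  exact h o ho o' ho' (fun heq => hne (congrArg f heq)) ip ⟨hf o ho ip hip, hf o' ho' ip hip'⟩

variable {WL : Finset ℕ} {wgt : ℕ → ℝ}

lemma collateralDamage_mono (hwgt : ∀ ip ∈ WL, 0 ≤ wgt ip) (hTS : T ⊆ S) :
    collateralDamage w WL wgt T ≤ collateralDamage w WL wgt S :=
  Finset.sum_le_sum_of_subset_of_nonneg hTS fun _ _ _ =>
    Finset.sum_nonneg fun ip hip => hwgt ip (Finset.mem_filter.1 hip).1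

lemma collateralDamage_image_le (hwgt : ∀ ip ∈ WL, 0 ≤ wgt ip)
    (hf : ∀ q ∈ S, ∀ ip, inI w (f q) ip → inI w q ip) :
    collateralDamage w WL wgt (S.image f) ≤ collateralDamage w WL wgt S := by
  have hblocked_nonneg : ∀ q, 0 ≤ ∑ ip ∈ WL.filter (fun ip => inI w q ip), wgt ip := fun _ =>
    Finset.sum_nonneg fun ip hip => hwgt ip (Finset.mem_filter.1 hip).1
  refine (Finset.sum_image_le_of_nonneg fun q _ => hblocked_nonneg q).trans ?_
  refine Finset.sum_le_sum fun q hq => Finset.sum_le_sum_of_subset_of_nonneg ?_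
    fun ip hip _ => hwgt ip (Finset.mem_filter.1 hip).1
  intro ip hip
  obtain ⟨hWL, hfq⟩ := Finset.mem_filter.1 hip
  exact Finset.mem_filter.2 ⟨hWL, hf q hq ip hfq⟩

end Shrinking

theorem stmt7_general (w : ℕ) (BL WL : Finset ℕ) (wgt : ℕ → ℝ)
    (hwgt : ∀ ip ∈ WL, 0 ≤ wgt ip)
    (S : Finset (ℕ × ℕ))
    (hvalid : ∀ q ∈ S, ValidPrefix w q)
    (hdisj : PairwiseDisjointI w S)
    (hcover : ∀ ip ∈ BL, ∃ q ∈ S, inI w q ip) :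
    ∃ S' : Finset (ℕ × ℕ),
      (∀ q ∈ S', ValidPrefix w q) ∧
      S'.card ≤ S.card ∧
      PairwiseDisjointI w S' ∧
      (∀ ip ∈ BL, ∃ q ∈ S', inI w q ip) ∧
      (∑ q ∈ S', ∑ ip ∈ WL.filter (fun ip => inI w q ip), wgt ip) ≤
        (∑ q ∈ S, ∑ ip ∈ WL.filter (fun ip => inI w q ip), wgt ip) ∧
      ∀ q ∈ S',
        (∃ ip ∈ BL, inI w q ip) ∧
        ∀ q', ValidPrefix w q' →
          (∀ ip ∈ BL, inI w q ip → inI w q' ip) →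
          (∀ ip, inI w q' ip → inI w q ip) →
          (∀ ip, inI w q' ip ↔ inI w q ip) := by
  set blocked : ℕ × ℕ → Finset ℕ := fun q => BL.filter (fun ip => inI w q ip)
  set T := S.filter fun q => (blocked q).Nonempty
  have hTS : T ⊆ S := Finset.filter_subset _ _
  have hlt : ∀ q ∈ T, ∀ x ∈ blocked q, x < 2 ^ w := fun q hq x hx =>
    lt_two_pow_of_inI (hvalid q (hTS hq)) (Finset.mem_filter.1 hx).2
  have hshrink : ∀ q ∈ T, ∀ ip, inI w (lcpPrefix w (blocked q)) ip → inI w q ip := fun q hq =>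
    lcpPrefix_subset (Finset.mem_filter.1 hq).2 (hvalid q (hTS hq)).1 fun x hx =>
      (Finset.mem_filter.1 hx).2
  refine ⟨T.image fun q => lcpPrefix w (blocked q), ?_, Finset.card_image_le.trans
    (Finset.card_filter_le _ _), (hdisj.mono hTS).image hshrink, ?_,
    (collateralDamage_image_le hwgt hshrink).trans (collateralDamage_mono hwgt hTS), ?_⟩
  · exact Finset.forall_mem_image.2 fun q hq =>
      validPrefix_lcpPrefix (Finset.mem_filter.1 hq).2 (hlt q hq)
  · intro ip hip
    obtain ⟨q, hqS, hq⟩ := hcover ip hip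
    have hblocked : ip ∈ blocked q := Finset.mem_filter.2 ⟨hip, hq⟩
    have hqT : q ∈ T := Finset.mem_filter.2 ⟨hqS, ip, hblocked⟩
    exact ⟨_, Finset.mem_image_of_mem _ hqT, inI_lcpPrefix (hlt q hqT) ip hblocked⟩
  · refine Finset.forall_mem_image.2 fun q hq => ?_
    obtain ⟨a, ha⟩ := (Finset.mem_filter.1 hq).2
    have hcovers := inI_lcpPrefix (hlt q hq)
    refine ⟨⟨a, (Finset.mem_filter.1 ha).1, hcovers a ha⟩, fun q' hq' hBL hsub ip => ?_⟩
    rw [eq_lcpPrefix ⟨a, ha⟩ hq'.1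
      (fun x hx => hBL x (Finset.mem_filter.1 hx).1 (hcovers x hx)) hsub]

/-- Any feasible BLOCK-ALL solution can be transformed into one that is no larger, no more
damaging, and in which every interval contains a blacklisted address and is the minimal
dyadic interval (longest common prefix) of the blacklisted addresses it covers. -/
theorem stmt7 (w : ℕ) (BL WL : Finset ℕ) (wgt : ℕ → ℝ)
    (hwgt : ∀ ip ∈ WL, 0 ≤ wgt ip) (hsub : ∀ ip ∈ BL, ip < 2 ^ w)
    (S : Finset (ℕ × ℕ))
    (hvalid : ∀ q ∈ S, ValidPrefix w q)
    (hdisj : PairwiseDisjointI w S)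
    (hcover : ∀ ip ∈ BL, ∃ q ∈ S, inI w q ip) :
    ∃ S' : Finset (ℕ × ℕ),
      (∀ q ∈ S', ValidPrefix w q) ∧
      S'.card ≤ S.card ∧
      PairwiseDisjointI w S' ∧
      (∀ ip ∈ BL, ∃ q ∈ S', inI w q ip) ∧
      (∑ q ∈ S', ∑ ip ∈ WL.filter (fun ip => inI w q ip), wgt ip) ≤
        (∑ q ∈ S, ∑ ip ∈ WL.filter (fun ip => inI w q ip), wgt ip) ∧
      ∀ q ∈ S',
        (∃ ip ∈ BL, inI w q ip) ∧
        ∀ q', ValidPrefix w q' →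
          (∀ ip ∈ BL, inI w q ip → inI w q' ip) →
          (∀ ip, inI w q' ip → inI w q ip) →
          (∀ ip, inI w q' ip ↔ inI w q ip) :=
  stmt7_general w BL WL wgt hwgt S hvalid hdisj hcover
end

section
/- BLOCK-ALL dynamic-programming recursion: let D be a dyadic interval whose both halves D_L, D_R meet BL, and for F ≥ 2 let z_D(F) denote the minimum collateral damage of covering BL ∩ D by at most F pairwise-disjoint dyadic subintervals of D. Then z_D(F) = min over n = 1,…,F−1 of ( z_{D_L}(F−n) + z_{D_R}(n) ), and z_D(1) = Σ_{ip ∈ WL ∩ D} w(ip). -/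
/-- `zBA w BL WL wgt D F`: minimum collateral damage of covering `BL ∩ D` by at most `F`
pairwise-disjoint dyadic subintervals of `D`. -/
noncomputable def zBA (w : ℕ) (BL WL : Finset ℕ) (wgt : ℕ → ℝ) (D : ℕ × ℕ) (F : ℕ) : ℝ :=
  sInf {x : ℝ | ∃ S : Finset (ℕ × ℕ),
    (∀ q ∈ S, ValidPrefix w q ∧ ∀ ip, inI w q ip → inI w D ip) ∧
    S.card ≤ F ∧ PairwiseDisjointI w S ∧
    (∀ ip ∈ BL, inI w D ip → ∃ q ∈ S, inI w q ip) ∧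
    x = ∑ q ∈ S, ∑ ip ∈ WL.filter (fun ip => inI w q ip), wgt ip}

/-!
A disjoint dyadic cover of `D` either has a member containing `D` — since dyadic intervals are
nonempty, that member is then the whole cover, and its damage, the good weight of `D`, is that of
the split `{D_L}`, `{D_R}` — or each of its members lies in one half, so it splits into covers of
`D_L` and `D_R`; as both halves meet `BL`, each part has at least one member. Conversely, covers
of the two halves unite to a cover of `D`. There are only finitely many covers (all prefixes are
valid), so every infimum is attained.
-/

section Dyadic

variable {w : ℕ}

theorem inI_iff_div {q : ℕ × ℕ} {ip : ℕ} : inI w q ip ↔ ip / 2 ^ (w - q.2) = q.1 := by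
  have hpos : 0 < 2 ^ (w - q.2) := by positivity
  rw [inI, Nat.div_eq_iff hpos, add_one_mul]
  omega

theorem div_two_pow_sub_eq {l l' : ℕ} (ip : ℕ) (hl' : l' ≤ l) (hl : l ≤ w) :
    ip / 2 ^ (w - l') = ip / 2 ^ (w - l) / 2 ^ (l - l') := by
  rw [Nat.div_div_eq_div_mul, ← pow_add]
  congr 2
  omega

theorem inI_iff_of_le {p l p' l' ip : ℕ} (hl' : l' ≤ l) (hl : l ≤ w) (hip : inI w (p, l) ip) :
    inI w (p', l') ip ↔ p / 2 ^ (l - l') = p' := by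
  rw [inI_iff_div] at hip ⊢
  rw [div_two_pow_sub_eq ip hl' hl, hip]

theorem inI_iff_inI_left_or_inI_right {p l ip : ℕ} (hl : l < w) :
    inI w (p, l) ip ↔ inI w (2 * p, l + 1) ip ∨ inI w (2 * p + 1, l + 1) ip := by
  have hdiv := div_two_pow_sub_eq (w := w) ip (Nat.le_add_right l 1) hl
  rw [Nat.add_sub_cancel_left, pow_one] at hdiv
  simp only [inI_iff_div, hdiv]
  omega

theorem not_inI_left_and_inI_right {p l ip : ℕ} :
    ¬(inI w (2 * p, l + 1) ip ∧ inI w (2 * p + 1, l + 1) ip) := by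
  simp only [inI_iff_div]
  omega

theorem inI_of_inI_left {p l ip : ℕ} (hl : l < w) (h : inI w (2 * p, l + 1) ip) : inI w (p, l) ip :=
  (inI_iff_inI_left_or_inI_right hl).2 (Or.inl h)

theorem inI_of_inI_right {p l ip : ℕ} (hl : l < w) (h : inI w (2 * p + 1, l + 1) ip) :
    inI w (p, l) ip :=
  (inI_iff_inI_left_or_inI_right hl).2 (Or.inr h)

theorem eq_of_inI_of_inI {a b l ip : ℕ} (ha : inI w (a, l) ip) (hb : inI w (b, l) ip) : a = b :=
  (inI_iff_div.1 ha).symm.trans (inI_iff_div.1 hb)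

theorem inI_self (q : ℕ × ℕ) : inI w q (q.1 * 2 ^ (w - q.2)) := by
  rw [inI_iff_div, Nat.mul_div_cancel _ (by positivity)]

theorem subset_left_or_subset_right_or_superset {p l : ℕ} {q : ℕ × ℕ} (hl : l < w) (hq : q.2 ≤ w)
    (hsub : ∀ ip, inI w q ip → inI w (p, l) ip) :
    (∀ ip, inI w q ip → inI w (2 * p, l + 1) ip) ∨
    (∀ ip, inI w q ip → inI w (2 * p + 1, l + 1) ip) ∨
    (∀ ip, inI w (p, l) ip → inI w q ip) := by
  obtain ⟨p', l'⟩ := q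
  have hbase : inI w (p', l') (p' * 2 ^ (w - l')) := inI_self (p', l')
  rcases le_or_gt l' l with hle | hlt
  · have hp' : p / 2 ^ (l - l') = p' := (inI_iff_of_le hle hl.le (hsub _ hbase)).1 hbase
    exact Or.inr (Or.inr fun ip hip => (inI_iff_of_le hle hl.le hip).2 hp')
  · set m := p' / 2 ^ (l' - (l + 1))
    have hhalf : ∀ ip, inI w (p', l') ip → inI w (m, l + 1) ip :=
      fun ip hip => (inI_iff_of_le hlt hq hip).2 rfl
    rcases (inI_iff_inI_left_or_inI_right hl).1 (hsub _ hbase) with h | h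
    · rw [eq_of_inI_of_inI (hhalf _ hbase) h] at hhalf
      exact Or.inl hhalf
    · rw [eq_of_inI_of_inI (hhalf _ hbase) h] at hhalf
      exact Or.inr (Or.inl hhalf)

end Dyadic

theorem ValidPrefix.left {w p l : ℕ} (hl : l < w) (hD : ValidPrefix w (p, l)) :
    ValidPrefix w (2 * p, l + 1) :=
  ⟨hl, by have hp : p < 2 ^ l := hD.2; rw [pow_succ]; omega⟩

theorem ValidPrefix.right {w p l : ℕ} (hl : l < w) (hD : ValidPrefix w (p, l)) :
    ValidPrefix w (2 * p + 1, l + 1) :=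
  ⟨hl, by have hp : p < 2 ^ l := hD.2; rw [pow_succ]; omega⟩

structure IsBlockingCover (w : ℕ) (BL : Finset ℕ) (D : ℕ × ℕ) (F : ℕ) (S : Finset (ℕ × ℕ)) :
    Prop where
  valid : ∀ q ∈ S, ValidPrefix w q
  subset : ∀ q ∈ S, ∀ ip, inI w q ip → inI w D ip
  card_le : S.card ≤ F
  pairwiseDisjoint : PairwiseDisjointI w S
  covers : ∀ ip ∈ BL, inI w D ip → ∃ q ∈ S, inI w q ip

section Cover

variable {w F : ℕ} {BL WL : Finset ℕ} {wgt : ℕ → ℝ} {D : ℕ × ℕ} {S : Finset (ℕ × ℕ)}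

theorem zBA_eq_sInf_image :
    zBA w BL WL wgt D F =
      sInf (collateralDamage w WL wgt '' {S | IsBlockingCover w BL D F S}) := by
  unfold zBA
  congr 1
  ext x
  constructor
  · rintro ⟨S, hsub, hcard, hdisj, hcov, rfl⟩
    exact ⟨S, ⟨fun q hq => (hsub q hq).1, fun q hq => (hsub q hq).2, hcard, hdisj, hcov⟩, rfl⟩
  · rintro ⟨S, hS, rfl⟩
    exact ⟨S, fun q hq => ⟨hS.valid q hq, hS.subset q hq⟩, hS.card_le, hS.pairwiseDisjoint,
      hS.covers, rfl⟩

theorem finite_setOf_isBlockingCover : {S | IsBlockingCover w BL D F S}.Finite := by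
  refine (Finset.range (2 ^ w) ×ˢ Finset.range (w + 1)).powerset.finite_toSet.subset ?_
  intro S hS
  rw [Finset.mem_coe, Finset.mem_powerset]
  intro q hq
  obtain ⟨hlw, hp⟩ := hS.valid q hq
  simp only [Finset.mem_product, Finset.mem_range]
  exact ⟨hp.trans_le (Nat.pow_le_pow_right two_pos hlw), Nat.lt_succ_of_le hlw⟩

theorem isBlockingCover_singleton (hD : ValidPrefix w D) (hF : 1 ≤ F) :
    IsBlockingCover w BL D F {D} where
  valid q hq := by rwa [Finset.mem_singleton.1 hq]
  subset q hq := by rw [Finset.mem_singleton.1 hq]; exact fun _ => id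
  card_le := by rwa [Finset.card_singleton]
  pairwiseDisjoint q hq q' hq' hne :=
    absurd ((Finset.mem_singleton.1 hq).trans (Finset.mem_singleton.1 hq').symm) hne
  covers _ _ hip := ⟨D, Finset.mem_singleton_self D, hip⟩

theorem zBA_le_collateralDamage (hS : IsBlockingCover w BL D F S) :
    zBA w BL WL wgt D F ≤ collateralDamage w WL wgt S := by
  rw [zBA_eq_sInf_image]
  exact csInf_le (finite_setOf_isBlockingCover.image _).bddBelow ⟨S, hS, rfl⟩

variable (BL WL wgt) in
theorem exists_isBlockingCover_collateralDamage_eq_zBA (hD : ValidPrefix w D) (hF : 1 ≤ F) :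
    ∃ S, IsBlockingCover w BL D F S ∧ collateralDamage w WL wgt S = zBA w BL WL wgt D F := by
  rw [zBA_eq_sInf_image]
  exact (Set.Nonempty.image _ ⟨_, isBlockingCover_singleton hD hF⟩).csInf_mem
    (finite_setOf_isBlockingCover.image _)

theorem collateralDamage_singleton (q : ℕ × ℕ) :
    collateralDamage w WL wgt {q} = ∑ ip ∈ WL.filter (fun ip => inI w q ip), wgt ip :=
  Finset.sum_singleton _ _

theorem collateralDamage_union {T : Finset (ℕ × ℕ)} (h : Disjoint S T) :
    collateralDamage w WL wgt (S ∪ T) = collateralDamage w WL wgt S + collateralDamage w WL wgt T :=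
  Finset.sum_union h

/-- Dyadic intervals are nonempty, so no other member of a disjoint cover fits beside `q`. -/
theorem IsBlockingCover.collateralDamage_eq_of_superset {q : ℕ × ℕ}
    (hS : IsBlockingCover w BL D F S) (hq : q ∈ S) (hDq : ∀ ip, inI w D ip → inI w q ip) :
    collateralDamage w WL wgt S = ∑ ip ∈ WL.filter (fun ip => inI w D ip), wgt ip := by
  have hSq : S = {q} := by
    refine Finset.eq_singleton_iff_unique_mem.2 ⟨hq, fun q' hq' => ?_⟩
    by_contra hne
    have hbase := inI_self (w := w) q'
    exact hS.pairwiseDisjoint q' hq' q hq hne _ ⟨hbase, hDq _ (hS.subset q' hq' _ hbase)⟩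
  rw [hSq, collateralDamage_singleton]
  congr 1
  exact Finset.filter_congr fun ip _ => ⟨hS.subset q hq ip, hDq ip⟩

end Cover

section Restrict

variable {w F : ℕ} {BL : Finset ℕ} {D : ℕ × ℕ} {S : Finset (ℕ × ℕ)}

theorem IsBlockingCover.mono {F' : ℕ} (hS : IsBlockingCover w BL D F S) (hF : F ≤ F') :
    IsBlockingCover w BL D F' S :=
  { hS with card_le := hS.card_le.trans hF }

theorem IsBlockingCover.card_pos (hS : IsBlockingCover w BL D F S)
    (hmeet : ∃ ip ∈ BL, inI w D ip) : 0 < S.card := by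
  obtain ⟨ip, hipB, hip⟩ := hmeet
  obtain ⟨q, hq, -⟩ := hS.covers ip hipB hip
  exact Finset.card_pos.2 ⟨q, hq⟩

open Classical in
theorem IsBlockingCover.restrict {D' : ℕ × ℕ} (hS : IsBlockingCover w BL D F S)
    (hD' : ∀ ip, inI w D' ip → inI w D ip)
    (hsep : ∀ q ∈ S, ∀ ip, inI w q ip → inI w D' ip → ∀ ip', inI w q ip' → inI w D' ip') :
    IsBlockingCover w BL D' (S.filter fun q => ∀ ip, inI w q ip → inI w D' ip).card
      (S.filter fun q => ∀ ip, inI w q ip → inI w D' ip) where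
  valid q hq := hS.valid q (Finset.mem_of_mem_filter q hq)
  subset q hq := (Finset.mem_filter.1 hq).2
  card_le := le_rfl
  pairwiseDisjoint q hq q' hq' :=
    hS.pairwiseDisjoint q (Finset.mem_of_mem_filter q hq) q' (Finset.mem_of_mem_filter q' hq')
  covers ip hipB hip := by
    obtain ⟨q, hq, hipq⟩ := hS.covers ip hipB (hD' ip hip)
    exact ⟨q, Finset.mem_filter.2 ⟨hq, hsep q hq ip hipq hip⟩, hipq⟩

end Restrict

section Halves

variable {w p l : ℕ} {BL WL : Finset ℕ} {wgt : ℕ → ℝ}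

theorem sum_filter_inI_eq_add (hl : l < w) :
    ∑ ip ∈ WL.filter (fun ip => inI w (p, l) ip), wgt ip =
      ∑ ip ∈ WL.filter (fun ip => inI w (2 * p, l + 1) ip), wgt ip +
        ∑ ip ∈ WL.filter (fun ip => inI w (2 * p + 1, l + 1) ip), wgt ip := by
  rw [← Finset.sum_union (Finset.disjoint_filter.2 fun ip _ hL hR =>
    not_inI_left_and_inI_right ⟨hL, hR⟩), ← Finset.filter_or]
  exact Finset.sum_congr (Finset.filter_congr fun ip _ => inI_iff_inI_left_or_inI_right hl)
    fun _ _ => rfl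

theorem disjoint_of_isBlockingCover_left_right {F₁ F₂ : ℕ} {SL SR : Finset (ℕ × ℕ)}
    (hSL : IsBlockingCover w BL (2 * p, l + 1) F₁ SL)
    (hSR : IsBlockingCover w BL (2 * p + 1, l + 1) F₂ SR) : Disjoint SL SR :=
  Finset.disjoint_left.2 fun q hqL hqR =>
    not_inI_left_and_inI_right ⟨hSL.subset q hqL _ (inI_self q), hSR.subset q hqR _ (inI_self q)⟩

theorem IsBlockingCover.union {F₁ F₂ : ℕ} {SL SR : Finset (ℕ × ℕ)} (hl : l < w)
    (hSL : IsBlockingCover w BL (2 * p, l + 1) F₁ SL)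
    (hSR : IsBlockingCover w BL (2 * p + 1, l + 1) F₂ SR) :
    IsBlockingCover w BL (p, l) (F₁ + F₂) (SL ∪ SR) where
  valid q hq := (Finset.mem_union.1 hq).elim (hSL.valid q) (hSR.valid q)
  subset q hq := (Finset.mem_union.1 hq).elim
    (fun h ip hip => inI_of_inI_left hl (hSL.subset q h ip hip))
    (fun h ip hip => inI_of_inI_right hl (hSR.subset q h ip hip))
  card_le := (Finset.card_union_le _ _).trans (add_le_add hSL.card_le hSR.card_le)
  pairwiseDisjoint := by
    rintro q hq q' hq' hne ip ⟨hip, hip'⟩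
    rcases Finset.mem_union.1 hq with h | h <;> rcases Finset.mem_union.1 hq' with h' | h'
    · exact hSL.pairwiseDisjoint q h q' h' hne ip ⟨hip, hip'⟩
    · exact not_inI_left_and_inI_right ⟨hSL.subset q h ip hip, hSR.subset q' h' ip hip'⟩
    · exact not_inI_left_and_inI_right ⟨hSL.subset q' h' ip hip', hSR.subset q h ip hip⟩
    · exact hSR.pairwiseDisjoint q h q' h' hne ip ⟨hip, hip'⟩
  covers ip hipB hip := by
    rcases (inI_iff_inI_left_or_inI_right hl).1 hip with h | h
    · obtain ⟨q, hq, hipq⟩ := hSL.covers ip hipB h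
      exact ⟨q, Finset.mem_union_left _ hq, hipq⟩
    · obtain ⟨q, hq, hipq⟩ := hSR.covers ip hipB h
      exact ⟨q, Finset.mem_union_right _ hq, hipq⟩

end Halves

section Recursion

variable {w p l F : ℕ} {BL WL : Finset ℕ} {wgt : ℕ → ℝ} {S : Finset (ℕ × ℕ)}

theorem IsBlockingCover.exists_split_of_forall_subset_half (hl : l < w)
    (hS : IsBlockingCover w BL (p, l) F S)
    (hhalf : ∀ q ∈ S, (∀ ip, inI w q ip → inI w (2 * p, l + 1) ip) ∨
      ∀ ip, inI w q ip → inI w (2 * p + 1, l + 1) ip)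
    (hLme : ∃ ip ∈ BL, inI w (2 * p, l + 1) ip) (hRme : ∃ ip ∈ BL, inI w (2 * p + 1, l + 1) ip) :
    ∃ n, 1 ≤ n ∧ n ≤ F - 1 ∧ ∃ SL SR, IsBlockingCover w BL (2 * p, l + 1) (F - n) SL ∧
      IsBlockingCover w BL (2 * p + 1, l + 1) n SR ∧
      collateralDamage w WL wgt S =
        collateralDamage w WL wgt SL + collateralDamage w WL wgt SR := by
  classical
  have hSL := hS.restrict (fun ip => inI_of_inI_left hl) fun q hq ip hip hipL =>
    (hhalf q hq).resolve_right fun hR => not_inI_left_and_inI_right ⟨hipL, hR ip hip⟩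
  have hSR := hS.restrict (fun ip => inI_of_inI_right hl) fun q hq ip hip hipR =>
    (hhalf q hq).resolve_left fun hL => not_inI_left_and_inI_right ⟨hL ip hip, hipR⟩
  set SL := S.filter fun q => ∀ ip, inI w q ip → inI w (2 * p, l + 1) ip
  set SR := S.filter fun q => ∀ ip, inI w q ip → inI w (2 * p + 1, l + 1) ip
  have hdisj := disjoint_of_isBlockingCover_left_right hSL hSR
  have hS_eq : S = SL ∪ SR := by
    rw [← Finset.filter_or, Finset.filter_true_of_mem hhalf]
  have hcard : SL.card + SR.card ≤ F := by
    rw [← Finset.card_union_of_disjoint hdisj, ← hS_eq]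
    exact hS.card_le
  have hL_pos := hSL.card_pos hLme
  have hR_pos := hSR.card_pos hRme
  refine ⟨SR.card, hR_pos, by omega, SL, SR, hSL.mono (by omega), hSR, ?_⟩
  rw [hS_eq, collateralDamage_union hdisj]

theorem IsBlockingCover.exists_split (hl : l < w) (hp : p < 2 ^ l) (hF : 2 ≤ F)
    (hS : IsBlockingCover w BL (p, l) F S)
    (hLme : ∃ ip ∈ BL, inI w (2 * p, l + 1) ip) (hRme : ∃ ip ∈ BL, inI w (2 * p + 1, l + 1) ip) :
    ∃ n, 1 ≤ n ∧ n ≤ F - 1 ∧ ∃ SL SR, IsBlockingCover w BL (2 * p, l + 1) (F - n) SL ∧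
      IsBlockingCover w BL (2 * p + 1, l + 1) n SR ∧
      collateralDamage w WL wgt S =
        collateralDamage w WL wgt SL + collateralDamage w WL wgt SR := by
  by_cases hfull : ∃ q ∈ S, ∀ ip, inI w (p, l) ip → inI w q ip
  · obtain ⟨q, hq, hDq⟩ := hfull
    have hD : ValidPrefix w (p, l) := ⟨hl.le, hp⟩
    refine ⟨1, le_rfl, by omega, _, _, isBlockingCover_singleton (hD.left hl) (by omega),
      isBlockingCover_singleton (hD.right hl) le_rfl, ?_⟩
    rw [hS.collateralDamage_eq_of_superset hq hDq, collateralDamage_singleton,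
      collateralDamage_singleton, sum_filter_inI_eq_add hl]
  · push Not at hfull
    refine hS.exists_split_of_forall_subset_half hl (fun q hq => ?_) hLme hRme
    obtain ⟨ip, hipD, hipq⟩ := hfull q hq
    rcases subset_left_or_subset_right_or_superset hl (hS.valid q hq).1 (hS.subset q hq)
      with h | h | h
    · exact Or.inl h
    · exact Or.inr h
    · exact absurd (h ip hipD) hipq

theorem zBA_eq_sInf_add (hl : l < w) (hp : p < 2 ^ l)
    (hLme : ∃ ip ∈ BL, inI w (2 * p, l + 1) ip) (hRme : ∃ ip ∈ BL, inI w (2 * p + 1, l + 1) ip)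
    (hF : 2 ≤ F) :
    zBA w BL WL wgt (p, l) F =
      sInf {x : ℝ | ∃ n, 1 ≤ n ∧ n ≤ F - 1 ∧
        x = zBA w BL WL wgt (2 * p, l + 1) (F - n) + zBA w BL WL wgt (2 * p + 1, l + 1) n} := by
  have hD : ValidPrefix w (p, l) := ⟨hl.le, hp⟩
  have hbdd : BddBelow {x : ℝ | ∃ n, 1 ≤ n ∧ n ≤ F - 1 ∧
      x = zBA w BL WL wgt (2 * p, l + 1) (F - n) + zBA w BL WL wgt (2 * p + 1, l + 1) n} :=
    ((Set.finite_Icc 1 (F - 1)).image fun n =>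
      zBA w BL WL wgt (2 * p, l + 1) (F - n) + zBA w BL WL wgt (2 * p + 1, l + 1) n).bddBelow.mono
      (by rintro _ ⟨n, hn1, hnF, rfl⟩; exact ⟨n, ⟨hn1, hnF⟩, rfl⟩)
  apply le_antisymm
  · refine le_csInf ⟨_, 1, le_rfl, by omega, rfl⟩ ?_
    rintro _ ⟨n, hn1, hnF, rfl⟩
    obtain ⟨SL, hSL, hzL⟩ :=
      exists_isBlockingCover_collateralDamage_eq_zBA BL WL wgt (hD.left hl) (by omega : 1 ≤ F - n)
    obtain ⟨SR, hSR, hzR⟩ :=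
      exists_isBlockingCover_collateralDamage_eq_zBA BL WL wgt (hD.right hl) hn1
    have hunion := hSL.union hl hSR
    rw [Nat.sub_add_cancel (by omega)] at hunion
    calc zBA w BL WL wgt (p, l) F ≤ collateralDamage w WL wgt (SL ∪ SR) :=
          zBA_le_collateralDamage hunion
      _ = _ := by
        rw [collateralDamage_union (disjoint_of_isBlockingCover_left_right hSL hSR), hzL, hzR]
  · obtain ⟨S, hS, hz⟩ :=
      exists_isBlockingCover_collateralDamage_eq_zBA BL WL wgt hD (by omega : 1 ≤ F)
    obtain ⟨n, hn1, hnF, SL, SR, hSL, hSR, hsplit⟩ :=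
      hS.exists_split (WL := WL) (wgt := wgt) hl hp hF hLme hRme
    calc sInf _ ≤ zBA w BL WL wgt (2 * p, l + 1) (F - n) + zBA w BL WL wgt (2 * p + 1, l + 1) n :=
          csInf_le hbdd ⟨n, hn1, hnF, rfl⟩
      _ ≤ collateralDamage w WL wgt SL + collateralDamage w WL wgt SR :=
          add_le_add (zBA_le_collateralDamage hSL) (zBA_le_collateralDamage hSR)
      _ = zBA w BL WL wgt (p, l) F := by rw [← hsplit, hz]

theorem zBA_one_eq_sum (hl : l < w) (hp : p < 2 ^ l)
    (hLme : ∃ ip ∈ BL, inI w (2 * p, l + 1) ip) (hRme : ∃ ip ∈ BL, inI w (2 * p + 1, l + 1) ip) :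
    zBA w BL WL wgt (p, l) 1 = ∑ ip ∈ WL.filter (fun ip => inI w (p, l) ip), wgt ip := by
  have hD : ValidPrefix w (p, l) := ⟨hl.le, hp⟩
  obtain ⟨S, hS, hz⟩ := exists_isBlockingCover_collateralDamage_eq_zBA BL WL wgt hD le_rfl
  obtain ⟨ipL, hipLB, hipL⟩ := hLme
  obtain ⟨ipR, hipRB, hipR⟩ := hRme
  obtain ⟨q, hq, hqL⟩ := hS.covers ipL hipLB (inI_of_inI_left hl hipL)
  obtain ⟨q', hq', hqR⟩ := hS.covers ipR hipRB (inI_of_inI_right hl hipR)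
  obtain rfl : q' = q := Finset.card_le_one.1 hS.card_le q' hq' q hq
  rw [← hz]
  rcases subset_left_or_subset_right_or_superset hl (hS.valid q' hq').1 (hS.subset q' hq')
    with h | h | h
  · exact absurd ⟨h ipR hqR, hipR⟩ not_inI_left_and_inI_right
  · exact absurd ⟨hipL, h ipL hqL⟩ not_inI_left_and_inI_right
  · exact hS.collateralDamage_eq_of_superset hq' h

end Recursion

theorem stmt10_general (w p l F : ℕ) (BL WL : Finset ℕ) (wgt : ℕ → ℝ)
    (hl : l < w) (hp : p < 2 ^ l)
    (hLme : ∃ ip ∈ BL, inI w (2 * p, l + 1) ip)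
    (hRme : ∃ ip ∈ BL, inI w (2 * p + 1, l + 1) ip)
    (hF : 2 ≤ F) :
    zBA w BL WL wgt (p, l) F =
      sInf {x : ℝ | ∃ n, 1 ≤ n ∧ n ≤ F - 1 ∧
        x = zBA w BL WL wgt (2 * p, l + 1) (F - n) +
            zBA w BL WL wgt (2 * p + 1, l + 1) n} ∧
    zBA w BL WL wgt (p, l) 1 = ∑ ip ∈ WL.filter (fun ip => inI w (p, l) ip), wgt ip :=
  ⟨zBA_eq_sInf_add hl hp hLme hRme hF, zBA_one_eq_sum hl hp hLme hRme⟩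

/-- BLOCK-ALL dynamic-programming recursion: if both halves of `D` meet the blacklist,
then for `F ≥ 2`, `z_D(F) = min over n = 1,…,F−1 of z_{D_L}(F−n) + z_{D_R}(n)`,
and `z_D(1)` equals the good weight of `D`. -/
theorem stmt10 (w p l F : ℕ) (BL WL : Finset ℕ) (wgt : ℕ → ℝ)
    (hwgt : ∀ ip ∈ WL, 0 ≤ wgt ip)
    (hl : l < w) (hp : p < 2 ^ l)
    (hLme : ∃ ip ∈ BL, inI w (2 * p, l + 1) ip)
    (hRme : ∃ ip ∈ BL, inI w (2 * p + 1, l + 1) ip)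
    (hF : 2 ≤ F) :
    zBA w BL WL wgt (p, l) F =
      sInf {x : ℝ | ∃ n, 1 ≤ n ∧ n ≤ F - 1 ∧
        x = zBA w BL WL wgt (2 * p, l + 1) (F - n) +
            zBA w BL WL wgt (2 * p + 1, l + 1) n} ∧
    zBA w BL WL wgt (p, l) 1 = ∑ ip ∈ WL.filter (fun ip => inI w (p, l) ip), wgt ip :=
  stmt10_general w p l F BL WL wgt hl hp hLme hRme hF
end

section
/- BLOCK-SOME degenerates to BLOCK-ALL under dominant bad weights: suppose every bad weight satisfies b(ip) > Σ_{jp ∈ WL} w(jp) (each bad address outweighs the entire whitelist), BL ≠ ∅ and F ≥ 1. Then every optimal solution of BLOCK-SOME with budget F covers all of BL, and its collateral damage equals the optimal value CD(F) of BLOCK-ALL. -/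
/-- `zBS w BL WL bw wgt D F`: BLOCK-SOME optimum on `D` with at most `F` filters:
minimum of (good weight blocked) − (bad weight blocked) over families of at most `F`
pairwise-disjoint dyadic subintervals of `D`. -/
noncomputable def zBS (w : ℕ) (BL WL : Finset ℕ) (bw wgt : ℕ → ℝ) (D : ℕ × ℕ) (F : ℕ) : ℝ :=
  sInf {x : ℝ | ∃ S : Finset (ℕ × ℕ),
    (∀ q ∈ S, ValidPrefix w q ∧ ∀ ip, inI w q ip → inI w D ip) ∧
    S.card ≤ F ∧ PairwiseDisjointI w S ∧
    x = (∑ q ∈ S, ∑ ip ∈ WL.filter (fun ip => inI w q ip), wgt ip) -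
        (∑ q ∈ S, ∑ ip ∈ BL.filter (fun ip => inI w q ip), bw ip)}

/-! The single filter `[0, 2^w)` has value at most `∑ WL - ∑ BL`, whereas a family of disjoint
filters missing some bad address `ip` blocks good weight `≥ 0` and bad weight `≤ ∑ BL - b(ip)`,
so its value exceeds `∑ WL - ∑ BL` when `b(ip) > ∑ WL`. Hence optimal BLOCK-SOME families cover
`BL`; on covering families the BLOCK-SOME objective is the BLOCK-ALL one minus the constant
`∑ BL`, so both problems have the same optimal collateral damage. -/

open Finset

def blockedWeight (w : ℕ) (S : Finset (ℕ × ℕ)) (A : Finset ℕ) (f : ℕ → ℝ) : ℝ :=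
  ∑ q ∈ S, ∑ ip ∈ A.filter (fun ip => inI w q ip), f ip

section Prefixes

variable {w : ℕ}

theorem inI_zero_zero_iff {ip : ℕ} : inI w (0, 0) ip ↔ ip < 2 ^ w := by
  simp [inI]

theorem ValidPrefix.inI_zero_zero {q : ℕ × ℕ} (hq : ValidPrefix w q) {ip : ℕ}
    (hip : inI w q ip) : inI w (0, 0) ip := by
  rw [inI_zero_zero_iff]
  calc ip < (q.1 + 1) * 2 ^ (w - q.2) := hip.2
    _ ≤ 2 ^ q.2 * 2 ^ (w - q.2) := Nat.mul_le_mul_right _ hq.2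
    _ = 2 ^ w := by rw [← pow_add, Nat.add_sub_cancel' hq.1]

theorem pairwiseDisjointI_singleton (q : ℕ × ℕ) : PairwiseDisjointI w {q} := by
  intro q₁ hq₁ q₂ hq₂ hne
  rw [mem_singleton] at hq₁ hq₂
  exact absurd (hq₁.trans hq₂.symm) hne

end Prefixes

namespace blockedWeight

variable {w : ℕ} {S : Finset (ℕ × ℕ)} {A : Finset ℕ} {f : ℕ → ℝ}

theorem nonneg (hf : ∀ ip ∈ A, 0 ≤ f ip) : 0 ≤ blockedWeight w S A f :=
  sum_nonneg fun _ _ => sum_nonneg fun ip hip => hf ip (mem_filter.mp hip).1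

theorem eq_sum_filter_covered (hS : PairwiseDisjointI w S) :
    blockedWeight w S A f = ∑ ip ∈ A.filter (fun ip => ∃ q ∈ S, inI w q ip), f ip := by
  rw [blockedWeight, ← sum_biUnion]
  · congr 1
    ext ip
    simp only [mem_biUnion, mem_filter]
    tauto
  · intro q hq q' hq' hne
    refine disjoint_left.mpr fun ip hip hip' => ?_
    exact hS q hq q' hq' hne ip ⟨(mem_filter.mp hip).2, (mem_filter.mp hip').2⟩

theorem le_sum (hS : PairwiseDisjointI w S) (hf : ∀ ip ∈ A, 0 ≤ f ip) :
    blockedWeight w S A f ≤ ∑ ip ∈ A, f ip := by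
  rw [eq_sum_filter_covered hS]
  exact sum_le_sum_of_subset_of_nonneg (filter_subset _ _) fun ip hip _ => hf ip hip

theorem le_sum_erase (hS : PairwiseDisjointI w S) (hf : ∀ ip ∈ A, 0 ≤ f ip) {ip₀ : ℕ}
    (hmiss : ∀ q ∈ S, ¬inI w q ip₀) :
    blockedWeight w S A f ≤ ∑ ip ∈ A.erase ip₀, f ip := by
  rw [eq_sum_filter_covered hS]
  refine sum_le_sum_of_subset_of_nonneg ?_ fun ip hip _ => hf ip (mem_of_mem_erase hip)
  intro ip hip
  obtain ⟨hipA, q, hq, hipq⟩ := mem_filter.mp hip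
  exact mem_erase.mpr ⟨fun h => hmiss q hq (h ▸ hipq), hipA⟩

theorem eq_sum_of_covers (hS : PairwiseDisjointI w S) (hcov : ∀ ip ∈ A, ∃ q ∈ S, inI w q ip) :
    blockedWeight w S A f = ∑ ip ∈ A, f ip := by
  rw [eq_sum_filter_covered hS, filter_true_of_mem hcov]

end blockedWeight

section Optima

variable {w F : ℕ} {BL WL : Finset ℕ} {bw wgt : ℕ → ℝ} {D : ℕ × ℕ}

theorem zBS_le_of_feasible (hb : ∀ ip ∈ BL, 0 ≤ bw ip) (hwgt : ∀ ip ∈ WL, 0 ≤ wgt ip)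
    {T : Finset (ℕ × ℕ)} (hT : ∀ q ∈ T, ValidPrefix w q ∧ ∀ ip, inI w q ip → inI w D ip)
    (hcard : T.card ≤ F) (hdisj : PairwiseDisjointI w T) :
    zBS w BL WL bw wgt D F ≤ blockedWeight w T WL wgt - blockedWeight w T BL bw := by
  refine csInf_le ⟨-∑ ip ∈ BL, bw ip, ?_⟩ ⟨T, hT, hcard, hdisj, rfl⟩
  rintro x ⟨T', -, -, hdisj', rfl⟩
  have hgood := blockedWeight.nonneg (w := w) (S := T') hwgt
  have hbad := blockedWeight.le_sum hdisj' hb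
  unfold blockedWeight at hgood hbad
  linarith

theorem zBA_le_of_feasible (hwgt : ∀ ip ∈ WL, 0 ≤ wgt ip)
    {T : Finset (ℕ × ℕ)} (hT : ∀ q ∈ T, ValidPrefix w q ∧ ∀ ip, inI w q ip → inI w D ip)
    (hcard : T.card ≤ F) (hdisj : PairwiseDisjointI w T)
    (hcov : ∀ ip ∈ BL, inI w D ip → ∃ q ∈ T, inI w q ip) :
    zBA w BL WL wgt D F ≤ blockedWeight w T WL wgt := by
  refine csInf_le ⟨0, ?_⟩ ⟨T, hT, hcard, hdisj, hcov, rfl⟩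
  rintro x ⟨T', -, -, -, -, rfl⟩
  exact blockedWeight.nonneg hwgt

theorem le_zBA {c : ℝ} {T₀ : Finset (ℕ × ℕ)}
    (hT₀ : ∀ q ∈ T₀, ValidPrefix w q ∧ ∀ ip, inI w q ip → inI w D ip)
    (hcard₀ : T₀.card ≤ F) (hdisj₀ : PairwiseDisjointI w T₀)
    (hcov₀ : ∀ ip ∈ BL, inI w D ip → ∃ q ∈ T₀, inI w q ip)
    (h : ∀ T : Finset (ℕ × ℕ), (∀ q ∈ T, ValidPrefix w q ∧ ∀ ip, inI w q ip → inI w D ip) →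
      T.card ≤ F → PairwiseDisjointI w T → (∀ ip ∈ BL, inI w D ip → ∃ q ∈ T, inI w q ip) →
      c ≤ blockedWeight w T WL wgt) :
    c ≤ zBA w BL WL wgt D F := by
  refine le_csInf ⟨_, T₀, hT₀, hcard₀, hdisj₀, hcov₀, rfl⟩ ?_
  rintro x ⟨T, hT, hcard, hdisj, hcov, rfl⟩
  exact h T hT hcard hdisj hcov

theorem zBS_zero_zero_le (hF : 1 ≤ F) (hBLsub : ∀ ip ∈ BL, ip < 2 ^ w)
    (hb : ∀ ip ∈ BL, 0 ≤ bw ip) (hwgt : ∀ ip ∈ WL, 0 ≤ wgt ip) :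
    zBS w BL WL bw wgt (0, 0) F ≤ ∑ ip ∈ WL, wgt ip - ∑ ip ∈ BL, bw ip := by
  have hfull : ∀ q ∈ ({(0, 0)} : Finset (ℕ × ℕ)),
      ValidPrefix w q ∧ ∀ ip, inI w q ip → inI w (0, 0) ip := by
    simp [ValidPrefix]
  have hcov : ∀ ip ∈ BL, ∃ q ∈ ({(0, 0)} : Finset (ℕ × ℕ)), inI w q ip :=
    fun ip hip => ⟨(0, 0), mem_singleton_self _, inI_zero_zero_iff.mpr (hBLsub ip hip)⟩
  calc zBS w BL WL bw wgt (0, 0) F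
      ≤ blockedWeight w {(0, 0)} WL wgt - blockedWeight w {(0, 0)} BL bw :=
        zBS_le_of_feasible hb hwgt hfull (by simpa using hF) (pairwiseDisjointI_singleton _)
    _ ≤ ∑ ip ∈ WL, wgt ip - ∑ ip ∈ BL, bw ip := by
        rw [blockedWeight.eq_sum_of_covers (pairwiseDisjointI_singleton _) hcov]
        linarith [blockedWeight.le_sum (pairwiseDisjointI_singleton (w := w) (0, 0)) hwgt]

theorem sum_sub_sum_lt_of_not_covered {S : Finset (ℕ × ℕ)} (hS : PairwiseDisjointI w S)
    (hb : ∀ ip ∈ BL, 0 ≤ bw ip) (hwgt : ∀ ip ∈ WL, 0 ≤ wgt ip) {ip₀ : ℕ} (hip₀ : ip₀ ∈ BL)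
    (hdom : ∑ jp ∈ WL, wgt jp < bw ip₀) (hmiss : ∀ q ∈ S, ¬inI w q ip₀) :
    ∑ ip ∈ WL, wgt ip - ∑ ip ∈ BL, bw ip <
      blockedWeight w S WL wgt - blockedWeight w S BL bw := by
  have hgood := blockedWeight.nonneg (w := w) (S := S) hwgt
  have hbad := blockedWeight.le_sum_erase hS hb hmiss
  have hsplit := sum_erase_add BL bw hip₀
  linarith

end Optima

theorem stmt13_general (w F : ℕ) (BL WL : Finset ℕ) (bw wgt : ℕ → ℝ)
    (hBLsub : ∀ ip ∈ BL, ip < 2 ^ w)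
    (hb : ∀ ip ∈ BL, 0 ≤ bw ip) (hwgt : ∀ ip ∈ WL, 0 ≤ wgt ip)
    (hdom : ∀ ip ∈ BL, (∑ jp ∈ WL, wgt jp) < bw ip)
    (hF : 1 ≤ F)
    (S : Finset (ℕ × ℕ))
    (hvalid : ∀ q ∈ S, ValidPrefix w q)
    (hcard : S.card ≤ F)
    (hS : PairwiseDisjointI w S)
    (hopt : (∑ q ∈ S, ∑ ip ∈ WL.filter (fun ip => inI w q ip), wgt ip) -
        (∑ q ∈ S, ∑ ip ∈ BL.filter (fun ip => inI w q ip), bw ip) =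
      zBS w BL WL bw wgt (0, 0) F) :
    (∀ ip ∈ BL, ∃ q ∈ S, inI w q ip) ∧
    (∑ q ∈ S, ∑ ip ∈ WL.filter (fun ip => inI w q ip), wgt ip) =
      zBA w BL WL wgt (0, 0) F := by
  have hSfeas : ∀ q ∈ S, ValidPrefix w q ∧ ∀ ip, inI w q ip → inI w (0, 0) ip :=
    fun q hq => ⟨hvalid q hq, fun _ => (hvalid q hq).inI_zero_zero⟩
  change blockedWeight w S WL wgt - blockedWeight w S BL bw = _ at hopt
  change _ ∧ blockedWeight w S WL wgt = _
  have hcover : ∀ ip ∈ BL, ∃ q ∈ S, inI w q ip := by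
    by_contra! ⟨ip₀, hip₀, hmiss⟩
    have := sum_sub_sum_lt_of_not_covered hS hb hwgt hip₀ (hdom ip₀ hip₀) hmiss
    linarith [zBS_zero_zero_le hF hBLsub hb hwgt]
  refine ⟨hcover, le_antisymm ?_ (zBA_le_of_feasible hwgt hSfeas hcard hS fun ip hip _ =>
    hcover ip hip)⟩
  refine le_zBA hSfeas hcard hS (fun ip hip _ => hcover ip hip) fun T hT hTcard hTdisj hTcov => ?_
  have hTcov' : ∀ ip ∈ BL, ∃ q ∈ T, inI w q ip :=
    fun ip hip => hTcov ip hip (inI_zero_zero_iff.mpr (hBLsub ip hip))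
  have hopt_le := hopt ▸ zBS_le_of_feasible hb hwgt hT hTcard hTdisj
  rw [blockedWeight.eq_sum_of_covers hS hcover, blockedWeight.eq_sum_of_covers hTdisj hTcov']
    at hopt_le
  linarith

/-- If every bad weight exceeds the total good weight, every optimal BLOCK-SOME solution
covers the whole blacklist and its collateral damage equals the BLOCK-ALL optimum. -/
theorem stmt13 (w F : ℕ) (BL WL : Finset ℕ) (bw wgt : ℕ → ℝ)
    (hdisj : Disjoint BL WL)
    (hBLsub : ∀ ip ∈ BL, ip < 2 ^ w) (hWLsub : ∀ ip ∈ WL, ip < 2 ^ w)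
    (hb : ∀ ip ∈ BL, 0 ≤ bw ip) (hwgt : ∀ ip ∈ WL, 0 ≤ wgt ip)
    (hdom : ∀ ip ∈ BL, (∑ jp ∈ WL, wgt jp) < bw ip)
    (hBL : BL.Nonempty) (hF : 1 ≤ F)
    (S : Finset (ℕ × ℕ))
    (hvalid : ∀ q ∈ S, ValidPrefix w q)
    (hcard : S.card ≤ F)
    (hS : PairwiseDisjointI w S)
    (hopt : (∑ q ∈ S, ∑ ip ∈ WL.filter (fun ip => inI w q ip), wgt ip) -
        (∑ q ∈ S, ∑ ip ∈ BL.filter (fun ip => inI w q ip), bw ip) =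
      zBS w BL WL bw wgt (0, 0) F) :
    (∀ ip ∈ BL, ∃ q ∈ S, inI w q ip) ∧
    (∑ q ∈ S, ∑ ip ∈ WL.filter (fun ip => inI w q ip), wgt ip) =
      zBA w BL WL wgt (0, 0) F :=
  stmt13_general w F BL WL bw wgt hBLsub hb hwgt hdom hF S hvalid hcard hS hopt
end

section
/- If a dyadic interval D contains at least two addresses of a finite set A, then there exist two disjoint dyadic intervals D₁, D₂ ⊆ D with D₁ ≠ D and D₂ ≠ D, such that D₁ ∪ D₂ ⊇ A ∩ D and D_i ∩ A ≠ ∅ for i = 1, 2. -/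
/-- `(p, l)` is a valid prefix: `l ≤ w` and `p < 2^l`. -/

lemma half_mem (w p l ip : ℕ) (hlw : l < w) :
    inI w (p, l) ip ↔ inI w (2*p, l+1) ip ∨ inI w (2*p+1, l+1) ip := by
  have hk : w - l = (w - (l+1)) + 1 := by omega
  unfold inI
  simp only [hk]
  set k := w - (l+1) with hkdef
  have e1 : p * 2 ^ (k+1) = 2*p*2^k := by ring
  have e2 : (p+1) * 2 ^ (k+1) = (2*p+1+1)*2^k := by ring
  constructor
  · rintro ⟨h1, h2⟩
    by_cases h : ip < (2*p+1) * 2^k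
    · left; constructor <;> [linarith [e1 ▸ h1]; exact h]
    · right; constructor <;> [omega; linarith [e2 ▸ h2]]
  · rintro (⟨h1, h2⟩ | ⟨h1, h2⟩)
    · constructor
      · rw [e1]; exact h1
      · rw [e2]; nlinarith [(Nat.pow_pos (show 0 < 2 by norm_num) : 0 < 2 ^ k)]
    · constructor
      · rw [e1]; nlinarith
      · rw [e2]; exact h2

lemma halves_disj (w p l ip : ℕ) :
    ¬(inI w (2*p, l+1) ip ∧ inI w (2*p+1, l+1) ip) := by
  unfold inI; rintro ⟨⟨_, h2⟩, ⟨h3, _⟩⟩; dsimp only at h2 h3; omega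

lemma aux (w : ℕ) (A : Finset ℕ) : ∀ n l p, w - l = n → l ≤ w → p < 2 ^ l →
    2 ≤ (A.filter (fun ip => inI w (p, l) ip)).card →
    ∃ q₁ q₂ : ℕ × ℕ,
      (q₁.2 ≤ w ∧ q₁.1 < 2 ^ q₁.2) ∧ (q₂.2 ≤ w ∧ q₂.1 < 2 ^ q₂.2) ∧
      (∀ ip, inI w q₁ ip → inI w (p, l) ip) ∧
      (∀ ip, inI w q₂ ip → inI w (p, l) ip) ∧
      (∀ ip, ¬(inI w q₁ ip ∧ inI w q₂ ip)) ∧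
      (∀ ip ∈ A, inI w (p, l) ip → inI w q₁ ip ∨ inI w q₂ ip) ∧
      (∃ ip ∈ A, inI w q₁ ip) ∧ (∃ ip ∈ A, inI w q₂ ip) ∧
      l < q₁.2 ∧ l < q₂.2 := by
  intro n
  induction n with
  | zero =>
    intro l p hn hl hp h2
    exfalso
    rw [show (2:ℕ) ≤ _ ↔ 1 < (A.filter (fun ip => inI w (p, l) ip)).card from Iff.rfl,
      Finset.one_lt_card] at h2
    obtain ⟨a, ha, b, hb, hab⟩ := h2
    simp only [Finset.mem_filter] at ha hb
    have hlw : l = w := by omega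
    have ha' := ha.2; have hb' := hb.2
    unfold inI at ha' hb'
    simp only [hlw, Nat.sub_self, pow_zero, mul_one] at ha' hb'
    omega
  | succ n ih =>
    intro l p hn hl hp h2
    have hlw : l < w := by omega
    set D1 := A.filter (fun ip => inI w (2*p, l+1) ip) with hD1
    set D2 := A.filter (fun ip => inI w (2*p+1, l+1) ip) with hD2
    have hsub : A.filter (fun ip => inI w (p, l) ip) ⊆ D1 ∪ D2 := by
      intro ip hip
      simp only [Finset.mem_filter, Finset.mem_union, hD1, hD2] at *
      rcases (half_mem w p l ip hlw).mp hip.2 with h | h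
      · exact Or.inl ⟨hip.1, h⟩
      · exact Or.inr ⟨hip.1, h⟩
    have hcard : 2 ≤ D1.card + D2.card :=
      le_trans (le_trans h2 (Finset.card_le_card hsub)) (Finset.card_union_le _ _)
    have hval1 : 2*p < 2^(l+1) := by rw [pow_succ]; omega
    have hval2 : 2*p+1 < 2^(l+1) := by rw [pow_succ]; omega
    by_cases hc1 : D1.card = 0
    · -- all in second half
      have hempty : D1 = ∅ := Finset.card_eq_zero.mp hc1
      have h2' : 2 ≤ D2.card := by
        have := Finset.card_le_card hsub
        rw [hempty, Finset.empty_union] at this; omega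
      obtain ⟨q₁, q₂, v1, v2, s1, s2, dj, cov, n1, n2, lt1, lt2⟩ :=
        ih (l+1) (2*p+1) (by omega) (by omega) hval2 h2'
      refine ⟨q₁, q₂, v1, v2, ?_, ?_, dj, ?_, n1, n2, by omega, by omega⟩
      · intro ip h; exact (half_mem w p l ip hlw).mpr (Or.inr (s1 ip h))
      · intro ip h; exact (half_mem w p l ip hlw).mpr (Or.inr (s2 ip h))
      · intro ip hip hD
        rcases (half_mem w p l ip hlw).mp hD with h | h
        · exfalso
          have : ip ∈ D1 := Finset.mem_filter.mpr ⟨hip, h⟩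
          rw [hempty] at this; exact absurd this (Finset.notMem_empty ip)
        · exact cov ip hip h
    · by_cases hc2 : D2.card = 0
      · have hempty : D2 = ∅ := Finset.card_eq_zero.mp hc2
        have h2' : 2 ≤ D1.card := by
          have := Finset.card_le_card hsub
          rw [hempty, Finset.union_empty] at this; omega
        obtain ⟨q₁, q₂, v1, v2, s1, s2, dj, cov, n1, n2, lt1, lt2⟩ :=
          ih (l+1) (2*p) (by omega) (by omega) hval1 h2'
        refine ⟨q₁, q₂, v1, v2, ?_, ?_, dj, ?_, n1, n2, by omega, by omega⟩
        · intro ip h; exact (half_mem w p l ip hlw).mpr (Or.inl (s1 ip h))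
        · intro ip h; exact (half_mem w p l ip hlw).mpr (Or.inl (s2 ip h))
        · intro ip hip hD
          rcases (half_mem w p l ip hlw).mp hD with h | h
          · exact cov ip hip h
          · exfalso
            have : ip ∈ D2 := Finset.mem_filter.mpr ⟨hip, h⟩
            rw [hempty] at this; exact absurd this (Finset.notMem_empty ip)
      · -- both nonempty: split into the two halves
        obtain ⟨a, ha⟩ := Finset.card_pos.mp (by omega : 0 < D1.card)
        obtain ⟨b, hb⟩ := Finset.card_pos.mp (by omega : 0 < D2.card)
        simp only [hD1, hD2, Finset.mem_filter] at ha hb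
        refine ⟨(2*p, l+1), (2*p+1, l+1), ⟨by omega, hval1⟩, ⟨by omega, hval2⟩,
          ?_, ?_, fun ip => halves_disj w p l ip, ?_,
          ⟨a, ha.1, ha.2⟩, ⟨b, hb.1, hb.2⟩, by omega, by omega⟩
        · intro ip h; exact (half_mem w p l ip hlw).mpr (Or.inl h)
        · intro ip h; exact (half_mem w p l ip hlw).mpr (Or.inr h)
        · intro ip _ hD; exact (half_mem w p l ip hlw).mp hD

/-- Filter-splitting: a dyadic interval containing at least two addresses of `A` can be
replaced by two strictly smaller disjoint dyadic subintervals covering `A ∩ D`,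
each containing an address of `A`. -/
theorem stmt14 (w p l : ℕ) (A : Finset ℕ) (hl : l ≤ w) (hp : p < 2 ^ l)
    (h2 : 2 ≤ (A.filter (fun ip => inI w (p, l) ip)).card) :
    ∃ q₁ q₂ : ℕ × ℕ,
      ValidPrefix w q₁ ∧ ValidPrefix w q₂ ∧
      (∀ ip, inI w q₁ ip → inI w (p, l) ip) ∧
      (∀ ip, inI w q₂ ip → inI w (p, l) ip) ∧
      (∀ ip, ¬(inI w q₁ ip ∧ inI w q₂ ip)) ∧
      (∀ ip ∈ A, inI w (p, l) ip → inI w q₁ ip ∨ inI w q₂ ip) ∧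
      (∃ ip ∈ A, inI w q₁ ip) ∧ (∃ ip ∈ A, inI w q₂ ip) ∧
      q₁ ≠ (p, l) ∧ q₂ ≠ (p, l) := by
  obtain ⟨q₁, q₂, v1, v2, s1, s2, dj, cov, n1, n2, lt1, lt2⟩ :=
    aux w A (w - l) l p rfl hl hp h2
  exact ⟨q₁, q₂, v1, v2, s1, s2, dj, cov, n1, n2,
    fun h => by simp [h] at lt1, fun h => by simp [h] at lt2⟩
end

section
/- TIME-VARYING update locality: let A be a finite set of addresses with |A| ≥ 1 and x ∉ A a new address, and let L(A) denote the set of internal LCP-tree nodes of A. Then |L(A ∪ {x})| = |L(A)| + 1 and L(A) ⊆ L(A ∪ {x}), i.e. the internal nodes of A ∪ {x} are those of A plus exactly one new node. -/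
/-- The internal nodes of the LCP tree of `A`: valid dyadic intervals both of whose
halves contain an element of `A`. -/
def Lset (w : ℕ) (A : Finset ℕ) : Finset (ℕ × ℕ) :=
  (Finset.range (2 ^ w) ×ˢ Finset.range w).filter
    (fun q => q.1 < 2 ^ q.2 ∧
      (∃ a ∈ A, inI w (2 * q.1, q.2 + 1) a) ∧ (∃ a ∈ A, inI w (2 * q.1 + 1, q.2 + 1) a))

lemma inI_iff (w l p a : ℕ) : inI w (p, l) a ↔ a / 2 ^ (w - l) = p := by
  have hk : 0 < 2 ^ (w - l) := pow_pos (by norm_num) _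
  unfold inI
  constructor
  · rintro ⟨h1, h2⟩
    have h3 : p ≤ a / 2 ^ (w - l) := (Nat.le_div_iff_mul_le hk).mpr h1
    have h4 : a / 2 ^ (w - l) < p + 1 := (Nat.div_lt_iff_lt_mul hk).mpr h2
    omega
  · rintro rfl
    exact ⟨Nat.div_mul_le_self a _, (Nat.div_lt_iff_lt_mul hk).mp (Nat.lt_succ_self _)⟩

lemma mem_Lset (w : ℕ) (A : Finset ℕ) (q : ℕ × ℕ) :
    q ∈ Lset w A ↔ q.2 < w ∧ q.1 < 2 ^ q.2 ∧
      (∃ a ∈ A, a / 2 ^ (w - (q.2 + 1)) = 2 * q.1) ∧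
      (∃ a ∈ A, a / 2 ^ (w - (q.2 + 1)) = 2 * q.1 + 1) := by
  obtain ⟨p, l⟩ := q
  simp only [Lset, Finset.mem_filter, Finset.mem_product, Finset.mem_range, inI_iff]
  constructor
  · rintro ⟨⟨_, hlw⟩, hpl, h1, h2⟩; exact ⟨hlw, hpl, h1, h2⟩
  · rintro ⟨hlw, hpl, h1, h2⟩
    exact ⟨⟨lt_of_lt_of_le hpl (Nat.pow_le_pow_right (by norm_num) hlw.le), hlw⟩, hpl, h1, h2⟩

lemma div_step {w l : ℕ} (a : ℕ) (hl : l < w) :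
    a / 2 ^ (w - (l + 1)) / 2 = a / 2 ^ (w - l) := by
  rw [Nat.div_div_eq_div_mul]
  congr 1
  rw [← pow_succ]
  congr 1
  omega

lemma div_tele {w l l' : ℕ} (a : ℕ) (h1 : l ≤ l') (h2 : l' ≤ w) :
    a / 2 ^ (w - l') / 2 ^ (l' - l) = a / 2 ^ (w - l) := by
  rw [Nat.div_div_eq_div_mul, ← pow_add]
  have h3 : w - l' + (l' - l) = w - l := by omega
  rw [h3]

/-- The right-half filter associated to a node. -/
def Fr (w : ℕ) (A : Finset ℕ) (q : ℕ × ℕ) : Finset ℕ :=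
  A.filter (fun c => c / 2 ^ (w - (q.2 + 1)) = 2 * q.1 + 1)

lemma mem_Fr {w : ℕ} {A : Finset ℕ} {q : ℕ × ℕ} {c : ℕ} :
    c ∈ Fr w A q ↔ c ∈ A ∧ c / 2 ^ (w - (q.2 + 1)) = 2 * q.1 + 1 := Finset.mem_filter

lemma Fr_nonempty {w : ℕ} {A : Finset ℕ} {q : ℕ × ℕ} (hq : q ∈ Lset w A) :
    (Fr w A q).Nonempty := by
  obtain ⟨_, _, _, a, ha, h⟩ := (mem_Lset w A q).mp hq
  exact ⟨a, Finset.mem_filter.mpr ⟨ha, h⟩⟩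

lemma card_Lset (w : ℕ) (A : Finset ℕ) (hA : A.Nonempty) (hsub : ∀ a ∈ A, a < 2 ^ w) :
    (Lset w A).card = A.card - 1 := by
  set m := A.min' hA with hm
  rw [← Finset.card_erase_of_mem (A.min'_mem hA)]
  apply Finset.card_bij (fun q hq => (Fr w A q).min' (Fr_nonempty hq))
  · -- maps into A.erase m
    intro q hq
    obtain ⟨hmemA, hdiv⟩ := mem_Fr.mp ((Fr w A q).min'_mem (Fr_nonempty hq))
    obtain ⟨hlw, hpl, ⟨b, hb, hbdiv⟩, _⟩ := (mem_Lset w A q).mp hq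
    refine Finset.mem_erase.mpr ⟨?_, hmemA⟩
    have hblt : b < (Fr w A q).min' (Fr_nonempty hq) := by
      by_contra h
      push_neg at h
      have := Nat.div_le_div_right (c := 2 ^ (w - (q.2 + 1))) h
      omega
    have := A.min'_le b hb
    omega
  · -- injective
    intro q1 hq1 q2 hq2 heq
    -- key claim: levels can't differ
    have key : ∀ qa qb : ℕ × ℕ, ∀ (hqa : qa ∈ Lset w A) (hqb : qb ∈ Lset w A),
        (Fr w A qa).min' (Fr_nonempty hqa) = (Fr w A qb).min' (Fr_nonempty hqb) →
        qa.2 < qb.2 → False := by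
      intro qa qb hqa hqb heq hlt
      set a := (Fr w A qa).min' (Fr_nonempty hqa) with ha
      have hmema := mem_Fr.mp ((Fr w A qa).min'_mem (Fr_nonempty hqa))
      have hmemb := mem_Fr.mp ((Fr w A qb).min'_mem (Fr_nonempty hqb))
      rw [← heq] at hmemb
      obtain ⟨hlwa, _, _, _⟩ := (mem_Lset w A qa).mp hqa
      obtain ⟨hlwb, _, ⟨b, hbA, hbdiv⟩, _⟩ := (mem_Lset w A qb).mp hqb
      -- b is in left half of qb; show b is in right half of qa, b < a
      have hba : b / 2 ^ (w - qb.2) = a / 2 ^ (w - qb.2) := by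
        rw [← div_step b hlwb, ← div_step a hlwb, hbdiv, hmemb.2]
        omega
      have hbq1 : b / 2 ^ (w - (qa.2 + 1)) = 2 * qa.1 + 1 := by
        rw [← div_tele b (show qa.2 + 1 ≤ qb.2 from hlt) hlwb.le, hba,
          div_tele a (show qa.2 + 1 ≤ qb.2 from hlt) hlwb.le, hmema.2]
      have hbF : b ∈ Fr w A qa := mem_Fr.mpr ⟨hbA, hbq1⟩
      have h1 : a ≤ b := (Fr w A qa).min'_le b hbF
      have h2 : b / 2 ^ (w - (qb.2 + 1)) < a / 2 ^ (w - (qb.2 + 1)) := by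
        rw [hbdiv, hmemb.2]; omega
      have := Nat.div_le_div_right (c := 2 ^ (w - (qb.2 + 1))) h1
      omega
    rcases lt_trichotomy q1.2 q2.2 with h | h | h
    · exact absurd (key q1 q2 hq1 hq2 heq h) (by simp)
    · -- same level: same p
      have hmem1 := mem_Fr.mp ((Fr w A q1).min'_mem (Fr_nonempty hq1))
      have hmem2 := mem_Fr.mp ((Fr w A q2).min'_mem (Fr_nonempty hq2))
      rw [heq] at hmem1
      have : 2 * q1.1 + 1 = 2 * q2.1 + 1 := by rw [← hmem1.2, h, hmem2.2]
      exact Prod.ext (by omega) h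
    · exact absurd (key q2 q1 hq2 hq1 heq.symm h) (by simp)
  · -- surjective
    intro a haE
    obtain ⟨hane, haA⟩ := Finset.mem_erase.mp haE
    have hma : m < a := lt_of_le_of_ne (A.min'_le a haA) (Ne.symm hane)
    set B := A.filter (· < a) with hB
    have hBne : B.Nonempty := ⟨m, Finset.mem_filter.mpr ⟨A.min'_mem hA, hma⟩⟩
    set b := B.max' hBne with hb
    obtain ⟨hbA, hba⟩ : b ∈ A ∧ b < a := Finset.mem_filter.mp (B.max'_mem hBne)
    have hbmax : ∀ c ∈ A, c < a → c ≤ b := fun c hc hca =>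
      B.le_max' c (Finset.mem_filter.mpr ⟨hc, hca⟩)
    -- find the branching level
    set P : ℕ → Prop := fun l => a / 2 ^ (w - l) = b / 2 ^ (w - l) with hP
    have hP0 : P 0 := by
      simp only [hP, Nat.sub_zero]
      rw [Nat.div_eq_of_lt (hsub a haA), Nat.div_eq_of_lt (hsub b hbA)]
    set l := Nat.findGreatest P w with hl
    have hPl : P l := Nat.findGreatest_spec (Nat.zero_le w) hP0
    have hlle : l ≤ w := Nat.findGreatest_le w
    have hlw : l < w := by
      rcases eq_or_lt_of_le hlle with h | h
      · exfalso
        have : P w := h ▸ hPl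
        simp only [hP, Nat.sub_self, pow_zero, Nat.div_one] at this
        omega
      · exact h
    have hnP : ¬ P (l + 1) := Nat.findGreatest_is_greatest (Nat.lt_succ_self l) hlw
    set k := w - (l + 1) with hk
    have hsa : a / 2 ^ k / 2 = a / 2 ^ (w - l) := div_step a hlw
    have hsb : b / 2 ^ k / 2 = b / 2 ^ (w - l) := div_step b hlw
    have hne : a / 2 ^ k ≠ b / 2 ^ k := hnP
    have hble : b / 2 ^ k ≤ a / 2 ^ k := Nat.div_le_div_right hba.le
    set p := a / 2 ^ (w - l) with hp
    have hca : a / 2 ^ k = 2 * p + 1 := by omega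
    have hcb : b / 2 ^ k = 2 * p := by omega
    have hplt : p < 2 ^ l := by
      rw [hp]
      have : a < 2 ^ l * 2 ^ (w - l) := by
        rw [← pow_add]
        have : l + (w - l) = w := by omega
        rw [this]; exact hsub a haA
      exact (Nat.div_lt_iff_lt_mul (pow_pos (by norm_num) _)).mpr this
    have hqmem : (p, l) ∈ Lset w A := by
      rw [mem_Lset]
      exact ⟨hlw, hplt, ⟨b, hbA, hcb⟩, ⟨a, haA, hca⟩⟩
    refine ⟨(p, l), hqmem, ?_⟩
    have haF : a ∈ Fr w A (p, l) := mem_Fr.mpr ⟨haA, hca⟩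
    apply le_antisymm ((Fr w A (p, l)).min'_le a haF)
    apply Finset.le_min'
    intro c hc
    obtain ⟨hcA, hcdiv⟩ := mem_Fr.mp hc
    have hcdiv' : c / 2 ^ k = 2 * p + 1 := hcdiv
    by_contra h
    push_neg at h
    have hcb' : c ≤ b := hbmax c hcA h
    have := Nat.div_le_div_right (c := 2 ^ k) hcb'
    omega

/-- Inserting a new address into a nonempty set adds exactly one internal node to the
LCP tree, and all old internal nodes remain. -/
theorem stmt18 (w : ℕ) (A : Finset ℕ) (x : ℕ) (hA : A.Nonempty) (hx : x ∉ A)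
    (hsub : ∀ a ∈ A, a < 2 ^ w) (hxw : x < 2 ^ w) :
    Lset w A ⊆ Lset w (insert x A) ∧
    (Lset w (insert x A)).card = (Lset w A).card + 1 := by
  have hsub' : ∀ a ∈ insert x A, a < 2 ^ w := by
    intro a ha
    rcases Finset.mem_insert.mp ha with h | h
    · exact h ▸ hxw
    · exact hsub a h
  constructor
  · intro q hq
    rw [mem_Lset] at hq ⊢
    obtain ⟨h1, h2, ⟨a, ha, h3⟩, ⟨a', ha', h4⟩⟩ := hq
    exact ⟨h1, h2, ⟨a, Finset.mem_insert_of_mem ha, h3⟩,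
      ⟨a', Finset.mem_insert_of_mem ha', h4⟩⟩
  · rw [card_Lset w A hA hsub, card_Lset w (insert x A) ⟨x, Finset.mem_insert_self x A⟩ hsub',
      Finset.card_insert_of_notMem hx]
    have := Finset.card_pos.mpr hA
    omega
end
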